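/- Let D be a strongly connected digraph, f a vertex-direction of D, and ((Aᵢ,Bᵢ))_{i∈ℕ} a strictly descending sequence of finite order separations with pairwise disjoint separators all pointing away from f. Let U be a set consisting of one vertex of f(Aᵢ ∩ Bᵢ) for each i ∈ ℕ. Then f is the unique vertex-direction of D in the closure of U. -/

import Mathlib

variable {V : Type*}

/-- Reachability from `a` to `b` by a directed walk staying inside the vertex set `S`. -/
def ReachIn (D : V → V → Prop) (S : Set V) (a b : V) : Prop :=
  a ∈ S ∧ b ∈ S ∧ Relation.ReflTransGen (fun x y => y ∈ S ∧ D x y) a b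

/-- `C` is a strong component of the subdigraph of `D` induced on `S`. -/
def IsSCCIn (D : V → V → Prop) (S : Set V) (C : Set V) : Prop :=
  ∃ a ∈ S, C = {b | ReachIn D S a b ∧ ReachIn D S b a}

/-- A directed ray in `D`. -/
def IsRay (D : V → V → Prop) (R : ℕ → V) : Prop :=
  Function.Injective R ∧ ∀ n, D (R n) (R (n + 1))

/-- A reverse directed ray in `D`. -/
def IsRevRay (D : V → V → Prop) (R : ℕ → V) : Prop :=
  Function.Injective R ∧ ∀ n, D (R (n + 1)) (R n)

/-- The ray `R` has a tail inside the vertex set `C`. -/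
def HasTailIn (R : ℕ → V) (C : Set V) : Prop :=
  ∃ n, ∀ m, n ≤ m → R m ∈ C

/-- A solid ray: for every finite `X` it has a tail in some strong component of `D − X`. -/
def Solid (D : V → V → Prop) (R : ℕ → V) : Prop :=
  IsRay D R ∧ ∀ X : Finset V, ∃ C, IsSCCIn D ((↑X : Set V)ᶜ) C ∧ HasTailIn R C

/-- Two solid rays are end-equivalent: for every finite `X` they have tails in the same
strong component of `D − X`. -/
def EndEquiv (D : V → V → Prop) (R R' : ℕ → V) : Prop :=
  ∀ X : Finset V, ∃ C, IsSCCIn D ((↑X : Set V)ᶜ) C ∧ HasTailIn R C ∧ HasTailIn R' C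

/-- `Ω` is an end of `D`: the class of solid rays equivalent to some solid ray. -/
def IsEnd (D : V → V → Prop) (Ω : Set (ℕ → V)) : Prop :=
  ∃ R, Solid D R ∧ Ω = {R' | Solid D R' ∧ EndEquiv D R R'}

/-- A (nonempty) directed path, recorded as its list of vertices. -/
def IsPathList (D : V → V → Prop) (l : List V) : Prop :=
  l ≠ [] ∧ l.Nodup ∧ l.Chain' D

/-- Infinitely many pairwise disjoint `A`–`B` paths in `D` (each meeting `A` precisely in its
first vertex and `B` precisely in its last vertex). -/
def DisjointPathsFrom (D : V → V → Prop) (A B : Set V) : Prop :=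
  ∃ P : ℕ → List V,
    (∀ k, IsPathList D (P k)) ∧
    (∀ j k, j ≠ k → ∀ x ∈ P j, x ∉ P k) ∧
    (∀ k, ∃ a, (P k).head? = some a ∧ a ∈ A) ∧
    (∀ k, ∃ b, (P k).getLast? = some b ∧ b ∈ B) ∧
    (∀ k, ∀ x ∈ (P k).tail, x ∉ A) ∧
    (∀ k, ∀ x ∈ (P k).dropLast, x ∉ B)

/-- A necklace in `D`: an inflated symmetric ray with finite branch sets (beads), given by its
beads together with the connecting (subdividing) paths in both directions. -/
structure Necklace (D : V → V → Prop) where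
  bead : ℕ → Set V
  fwd : ℕ → List V
  bwd : ℕ → List V
  bead_fin : ∀ n, (bead n).Finite
  bead_nonempty : ∀ n, (bead n).Nonempty
  bead_disj : ∀ m n, m ≠ n → Disjoint (bead m) (bead n)
  bead_strong : ∀ n, ∀ a ∈ bead n, ∀ b ∈ bead n, ReachIn D (bead n) a b
  fwd_path : ∀ n, IsPathList D (fwd n)
  bwd_path : ∀ n, IsPathList D (bwd n)
  fwd_head : ∀ n a, (fwd n).head? = some a → a ∈ bead n
  fwd_last : ∀ n b, (fwd n).getLast? = some b → b ∈ bead (n + 1)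
  bwd_head : ∀ n a, (bwd n).head? = some a → a ∈ bead (n + 1)
  bwd_last : ∀ n b, (bwd n).getLast? = some b → b ∈ bead n
  fwd_inner : ∀ n, ∀ x ∈ (fwd n).tail.dropLast, ∀ m, x ∉ bead m
  bwd_inner : ∀ n, ∀ x ∈ (bwd n).tail.dropLast, ∀ m, x ∉ bead m
  fwd_fwd_disj : ∀ m n, m ≠ n → ∀ x ∈ (fwd m).tail.dropLast, x ∉ (fwd n).tail.dropLast
  bwd_bwd_disj : ∀ m n, m ≠ n → ∀ x ∈ (bwd m).tail.dropLast, x ∉ (bwd n).tail.dropLast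
  fwd_bwd_disj : ∀ m n, ∀ x ∈ (fwd m).tail.dropLast, x ∉ (bwd n).tail.dropLast

/-- The vertex set of a necklace. -/
def Necklace.verts {D : V → V → Prop} (N : Necklace D) : Set V :=
  (⋃ n, N.bead n) ∪ {x | ∃ n, x ∈ N.fwd n ∨ x ∈ N.bwd n}

/-- A necklace is attached to `𝒰` if infinitely many of its beads meet every set in `𝒰`. -/
def Necklace.AttachedTo {D : V → V → Prop} (N : Necklace D) (𝒰 : Finset (Set V)) : Prop :=
  {n | ∀ U ∈ 𝒰, (N.bead n ∩ U).Nonempty}.Infinite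

/-- A necklace represents the end of the solid ray `R`: for every finite `X`, all but finitely
many beads lie in the strong component of `D − X` in which `R` has a tail. -/
def NecklaceRepresents {D : V → V → Prop} (N : Necklace D) (R : ℕ → V) : Prop :=
  ∀ X : Finset V, ∃ C, IsSCCIn D ((↑X : Set V)ᶜ) C ∧ HasTailIn R C ∧
    ∃ n₀, ∀ n, n₀ ≤ n → N.bead n ⊆ C

/-- `URankLE D 𝒰 S α`: the subdigraph of `D` induced on `S` has `𝒰`-rank at most `α`. -/
inductive URankLE (D : V → V → Prop) (𝒰 : Finset (Set V)) : Set V → Ordinal → Prop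
  | base (S : Set V) (α : Ordinal) (U : Set V) (hU : U ∈ 𝒰) (h : (U ∩ S).Finite) :
      URankLE D 𝒰 S α
  | step (S : Set V) (α : Ordinal) (X : Finset V) (r : Set V → Ordinal)
      (hr : ∀ C, IsSCCIn D (S \ ↑X) C → r C < α)
      (h : ∀ C, IsSCCIn D (S \ ↑X) C → URankLE D 𝒰 C (r C)) :
      URankLE D 𝒰 S α

/-- `D` (induced on `S`) has `𝒰`-rank exactly `α`. -/
def HasURank (D : V → V → Prop) (𝒰 : Finset (Set V)) (S : Set V) (α : Ordinal) : Prop :=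
  URankLE D 𝒰 S α ∧ ∀ β < α, ¬ URankLE D 𝒰 S β

/-- A vertex-direction of `D`. -/
def IsVertexDirection (D : V → V → Prop) (f : Finset V → Set V) : Prop :=
  (∀ X : Finset V, IsSCCIn D ((↑X : Set V)ᶜ) (f X)) ∧
  ∀ X Y : Finset V, X ⊆ Y → f Y ⊆ f X

/-- A separation `(A,B)` of `D`: `A ∪ B = V(D)` and no edge from `B∖A` to `A∖B`. -/
def IsSep (D : V → V → Prop) (A B : Set V) : Prop :=
  A ∪ B = Set.univ ∧ ∀ a ∈ B \ A, ∀ b ∈ A \ B, ¬ D a b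

/-- A finite order separation `(A,B)` points towards the vertex-direction `f`. -/
def PointsTowards (D : V → V → Prop) (f : Finset V → Set V) (A B : Set V)
    (h : (A ∩ B).Finite) : Prop :=
  f h.toFinset ⊆ B \ A

/-- A finite order separation `(A,B)` points away from the vertex-direction `f`. -/
def PointsAway (D : V → V → Prop) (f : Finset V → Set V) (A B : Set V)
    (h : (A ∩ B).Finite) : Prop :=
  f h.toFinset ⊆ A \ B

/-- The vertex `v` dominates the vertex-direction `f`. -/
def DomDir (D : V → V → Prop) (v : V) (f : Finset V → Set V) : Prop :=
  ∀ A B, IsSep D A B → ∀ h : (A ∩ B).Finite, PointsAway D f A B h → v ∈ A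

/-- An infinite `v`–`B` fan: infinitely many `v`–`B` paths meeting pairwise precisely in `v`. -/
def Fan (D : V → V → Prop) (v : V) (B : Set V) : Prop :=
  ∃ P : ℕ → List V,
    (∀ k, IsPathList D (P k)) ∧
    (∀ k, (P k).head? = some v) ∧
    (∀ k, 2 ≤ (P k).length) ∧
    (∀ k, ∃ b, (P k).getLast? = some b ∧ b ∈ B) ∧
    (∀ k, ∀ x ∈ (P k).dropLast, x ∉ B) ∧
    (∀ j k, j ≠ k → ∀ x ∈ (P j).tail, x ∉ (P k).tail)

/-- Limit edge between the ends of the solid rays `R` and `R'`. -/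
def LimitEdgeEE (D : V → V → Prop) (R R' : ℕ → V) : Prop :=
  ∀ (X : Finset V) C C', IsSCCIn D ((↑X : Set V)ᶜ) C → HasTailIn R C →
    IsSCCIn D ((↑X : Set V)ᶜ) C' → HasTailIn R' C' → C ≠ C' →
    ∃ a ∈ C, ∃ b ∈ C', D a b

/-- Limit edge from the vertex `v` to the end of the solid ray `R`. -/
def LimitEdgeVE (D : V → V → Prop) (v : V) (R : ℕ → V) : Prop :=
  ∀ (X : Finset V) C, IsSCCIn D ((↑X : Set V)ᶜ) C → HasTailIn R C → v ∉ C →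
    ∃ b ∈ C, D v b

/-- Limit edge from the end of the solid ray `R` to the vertex `v`. -/
def LimitEdgeEV (D : V → V → Prop) (R : ℕ → V) (v : V) : Prop :=
  ∀ (X : Finset V) C, IsSCCIn D ((↑X : Set V)ᶜ) C → HasTailIn R C → v ∉ C →
    ∃ a ∈ C, D a v

/-- A subdivided infinite out-star in `D` with centre `c`, given by its paths. -/
def IsStar (D : V → V → Prop) (c : V) (P : ℕ → List V) : Prop :=
  (∀ k, IsPathList D (P k)) ∧ (∀ k, (P k).head? = some c) ∧
  (∀ k, 2 ≤ (P k).length) ∧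
  (∀ j k, j ≠ k → ∀ x ∈ (P j).tail, x ∉ (P k).tail)

/-- A directed comb in `D` with spine `R`, given by its (pairwise disjoint) paths each meeting
`R` precisely in its first vertex. -/
def IsComb (D : V → V → Prop) (R : ℕ → V) (P : ℕ → List V) : Prop :=
  IsRay D R ∧ (∀ k, IsPathList D (P k)) ∧
  (∀ k, ∃ n, (P k).head? = some (R n)) ∧
  (∀ k, ∀ x ∈ (P k).tail, ∀ n, x ≠ R n) ∧
  (∀ j k, j ≠ k → ∀ x ∈ P j, x ∉ P k)

/-- A star in `D` whose `k`-th leaf is `a k`. -/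
def StarAttachedWith (D : V → V → Prop) (a : ℕ → V) : Prop :=
  ∃ c P, IsStar D c P ∧ ∀ k, (P k).getLast? = some (a k)

/-- A comb in `D` whose `k`-th tooth is `a k`. -/
def CombAttachedWith (D : V → V → Prop) (a : ℕ → V) : Prop :=
  ∃ R P, IsComb D R P ∧ ∀ k, (P k).getLast? = some (a k)

/-- `a` and `b` are consecutive entries of the list `l`. -/
def AdjInList (l : List V) (a b : V) : Prop :=
  ∃ l₁ l₂, l = l₁ ++ a :: b :: l₂

/-- The edge relation of (a subdigraph of `D` forming) the necklace `N`: all `D`-edges inside a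
bead together with the edges of the connecting paths. -/
def Necklace.edges {D : V → V → Prop} (N : Necklace D) (a b : V) : Prop :=
  D a b ∧ ((∃ n, a ∈ N.bead n ∧ b ∈ N.bead n) ∨
    (∃ n, AdjInList (N.fwd n) a b ∨ AdjInList (N.bwd n) a b))

/-- A generalized ray: a directed ray (`true`) or a reverse directed ray (`false`). -/
def IsGenRay (D : V → V → Prop) : Bool × (ℕ → V) → Prop
  | (true, R) => IsRay D R
  | (false, R) => IsRevRay D R

/-- Pre-end equivalence of generalized rays: infinitely many disjoint paths in both
directions. -/
def PreEquiv (D : V → V → Prop) (Q Q' : Bool × (ℕ → V)) : Prop :=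
  DisjointPathsFrom D (Set.range Q.2) (Set.range Q'.2) ∧
  DisjointPathsFrom D (Set.range Q'.2) (Set.range Q.2)

/-- The pre-end `γ` includes the end represented by the solid ray `R`. -/
def IncludesEnd (D : V → V → Prop) (γ : Set (Bool × (ℕ → V))) (R : ℕ → V) : Prop :=
  Solid D R ∧ ∀ R', Solid D R' → EndEquiv D R R' → (true, R') ∈ γ

/-- The set of edges of `D` from `A` to `B`. -/
def EdgesBetween (D : V → V → Prop) (A B : Set V) : Set (V × V) :=
  {e | D e.1 e.2 ∧ e.1 ∈ A ∧ e.2 ∈ B}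

/-- A bundle of `D − X`. -/
def IsBundle (D : V → V → Prop) (X : Finset V) (E : Set (V × V)) : Prop :=
  E.Nonempty ∧
  ((∃ C C', IsSCCIn D ((↑X : Set V)ᶜ) C ∧ IsSCCIn D ((↑X : Set V)ᶜ) C' ∧ C ≠ C' ∧
      E = EdgesBetween D C C') ∨
   (∃ v ∈ X, ∃ C, IsSCCIn D ((↑X : Set V)ᶜ) C ∧
      (E = EdgesBetween D {v} C ∨ E = EdgesBetween D C {v})))

/-- Compatibility `f(X) ⊇ f(Y)` between values of a direction (a strong component is regarded
as containing a bundle if it contains all its edges). -/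
def DirCompat : Set V ⊕ Set (V × V) → Set V ⊕ Set (V × V) → Prop
  | Sum.inl C, Sum.inl C' => C' ⊆ C
  | Sum.inl C, Sum.inr E' => ∀ e ∈ E', e.1 ∈ C ∧ e.2 ∈ C
  | Sum.inr _, Sum.inl _ => False
  | Sum.inr E, Sum.inr E' => E' ⊆ E

/-- A direction of `D`: maps each finite `X` to a strong component or a bundle of `D − X`,
compatibly. -/
def IsDirection (D : V → V → Prop) (f : Finset V → Set V ⊕ Set (V × V)) : Prop :=
  (∀ X : Finset V, (∃ C, IsSCCIn D ((↑X : Set V)ᶜ) C ∧ f X = Sum.inl C) ∨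
    (∃ E, IsBundle D X E ∧ f X = Sum.inr E)) ∧
  ∀ X Y : Finset V, X ⊆ Y → DirCompat (f X) (f Y)

/-- An edge-direction: a direction whose value is a bundle for some finite `X`. -/
def IsEdgeDirection (D : V → V → Prop) (f : Finset V → Set V ⊕ Set (V × V)) : Prop :=
  IsDirection D f ∧ ∃ (X : Finset V) (E : Set (V × V)), f X = Sum.inr E

/-- The three kinds of (potential) limit edges: end–end, vertex–end, end–vertex.
Ends are given as sets of (solid) rays. -/
inductive LimitEdgeObj (V : Type*) where
  | ee (Ω₁ Ω₂ : Set (ℕ → V))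
  | ve (v : V) (Ω : Set (ℕ → V))
  | ev (Ω : Set (ℕ → V)) (v : V)

/-- `l` is a limit edge of `D`. -/
def IsLimitEdge (D : V → V → Prop) : LimitEdgeObj V → Prop
  | LimitEdgeObj.ee Ω₁ Ω₂ => IsEnd D Ω₁ ∧ IsEnd D Ω₂ ∧ Ω₁ ≠ Ω₂ ∧
      ∀ R ∈ Ω₁, ∀ R' ∈ Ω₂, LimitEdgeEE D R R'
  | LimitEdgeObj.ve v Ω => IsEnd D Ω ∧ ∀ R ∈ Ω, LimitEdgeVE D v R
  | LimitEdgeObj.ev Ω v => IsEnd D Ω ∧ ∀ R ∈ Ω, LimitEdgeEV D R v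

/-- `f` agrees with the map `f_λ` for the end–end limit edge `Ω₁Ω₂`. -/
def AgreesEE (D : V → V → Prop) (Ω₁ Ω₂ : Set (ℕ → V))
    (f : Finset V → Set V ⊕ Set (V × V)) : Prop :=
  ∀ (X : Finset V), ∀ R ∈ Ω₁, ∀ R' ∈ Ω₂, ∀ C C',
    IsSCCIn D ((↑X : Set V)ᶜ) C → HasTailIn R C →
    IsSCCIn D ((↑X : Set V)ᶜ) C' → HasTailIn R' C' →
    (C = C' → f X = Sum.inl C) ∧ (C ≠ C' → f X = Sum.inr (EdgesBetween D C C'))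

/-- `f` agrees with the map `f_λ` for the vertex–end limit edge `vΩ`. -/
def AgreesVE (D : V → V → Prop) (v : V) (Ω : Set (ℕ → V))
    (f : Finset V → Set V ⊕ Set (V × V)) : Prop :=
  ∀ (X : Finset V), ∀ R ∈ Ω, ∀ C, IsSCCIn D ((↑X : Set V)ᶜ) C → HasTailIn R C →
    (v ∈ C → f X = Sum.inl C) ∧
    (v ∈ (↑X : Set V) → f X = Sum.inr (EdgesBetween D {v} C)) ∧
    (∀ C', IsSCCIn D ((↑X : Set V)ᶜ) C' → v ∈ C' → C' ≠ C →
      f X = Sum.inr (EdgesBetween D C' C))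

/-- `f` agrees with the map `f_λ` for the end–vertex limit edge `Ωv`. -/
def AgreesEV (D : V → V → Prop) (Ω : Set (ℕ → V)) (v : V)
    (f : Finset V → Set V ⊕ Set (V × V)) : Prop :=
  ∀ (X : Finset V), ∀ R ∈ Ω, ∀ C, IsSCCIn D ((↑X : Set V)ᶜ) C → HasTailIn R C →
    (v ∈ C → f X = Sum.inl C) ∧
    (v ∈ (↑X : Set V) → f X = Sum.inr (EdgesBetween D C {v})) ∧
    (∀ C', IsSCCIn D ((↑X : Set V)ᶜ) C' → v ∈ C' → C' ≠ C →
      f X = Sum.inr (EdgesBetween D C C'))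

/-- `f` agrees with `f_λ` for the limit edge `l`. -/
def Agrees (D : V → V → Prop) : LimitEdgeObj V → (Finset V → Set V ⊕ Set (V × V)) → Prop
  | LimitEdgeObj.ee Ω₁ Ω₂, f => AgreesEE D Ω₁ Ω₂ f
  | LimitEdgeObj.ve v Ω, f => AgreesVE D v Ω f
  | LimitEdgeObj.ev Ω v, f => AgreesEV D Ω v f

/-!
Since `D` is strongly connected and consecutive separators are disjoint, the sets `A i \ B i`
have empty intersection: that intersection is closed under in-neighbours, so it would be
everything, forcing all separations to be trivial. Hence every finite `X` misses `A k \ B k` for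
all large `k`, and since `f(A k ∩ B k) ⊆ A k \ B k` is connected and avoids `X`, it lies in `f X`;
so `u k ∈ f X` for all large `k`. If `g` is in the closure of `U`, then `g X` contains `u k` for
arbitrarily large `k` (apply the closure property to `X` together with finitely many `u i`), so
`g X` and `f X` share a vertex and are the same strong component.
-/

open Filter

section StrongComponents

variable {D : V → V → Prop}

lemma ReachIn.trans {S : Set V} {a b c : V} (hab : ReachIn D S a b) (hbc : ReachIn D S b c) :
    ReachIn D S a c :=
  ⟨hab.1, hbc.2.1, hab.2.2.trans hbc.2.2⟩

lemma ReachIn.mono {S T : Set V} (hST : S ⊆ T) {a b : V} (hab : ReachIn D S a b) :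
    ReachIn D T a b :=
  ⟨hST hab.1, hST hab.2.1,
    Relation.ReflTransGen.mono (fun _ _ hxy => ⟨hST hxy.1, hxy.2⟩) _ _ hab.2.2⟩

namespace IsSCCIn

variable {S C : Set V}

lemma subset (hC : IsSCCIn D S C) : C ⊆ S := by
  obtain ⟨a, -, rfl⟩ := hC
  exact fun b hb => hb.1.2.1

lemma nonempty (hC : IsSCCIn D S C) : C.Nonempty := by
  obtain ⟨a, ha, rfl⟩ := hC
  exact ⟨a, ⟨ha, ha, .refl⟩, ⟨ha, ha, .refl⟩⟩

lemma eq_of_mem (hC : IsSCCIn D S C) {c : V} (hc : c ∈ C) :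
    C = {b | ReachIn D S c b ∧ ReachIn D S b c} := by
  obtain ⟨a, -, rfl⟩ := hC
  ext b
  exact ⟨fun hb => ⟨hc.2.trans hb.1, hb.2.trans hc.1⟩,
    fun hb => ⟨hc.1.trans hb.1, hb.2.trans hc.2⟩⟩

lemma eq_of_mem_of_mem {C' : Set V} (hC : IsSCCIn D S C) (hC' : IsSCCIn D S C') {c : V}
    (hc : c ∈ C) (hc' : c ∈ C') : C = C' := by
  rw [hC.eq_of_mem hc, hC'.eq_of_mem hc']

lemma reachIn_self (hC : IsSCCIn D S C) {b c : V} (hb : b ∈ C) (hc : c ∈ C) :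
    ReachIn D C b c := by
  obtain ⟨a, ha, rfl⟩ := hC
  refine ⟨hb, hc, ?_⟩
  -- every vertex `w` on a walk inside `S` from `b` to `c` is reachable from `a` (through `b`)
  -- and reaches `a` (through `c`)
  suffices ∀ w, Relation.ReflTransGen (fun x y => y ∈ S ∧ D x y) w c → ReachIn D S a w →
      Relation.ReflTransGen
        (fun x y => y ∈ {b | ReachIn D S a b ∧ ReachIn D S b a} ∧ D x y) w c from
    this b (hb.2.trans hc.1).2.2 hb.1
  intro w hwc
  induction hwc using Relation.ReflTransGen.head_induction_on with
  | refl => exact fun _ => .refl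
  | @head w y hwy hyc ih =>
    intro haw
    have hay : ReachIn D S a y := ⟨ha, hwy.1, haw.2.2.tail hwy⟩
    exact .head ⟨⟨hay, hwy.1, ha, hyc.trans hc.2.2.2⟩, hwy.2⟩ (ih hay)

lemma subset_of_subset {S' C' : Set V} (hC : IsSCCIn D S C) (hC' : IsSCCIn D S' C')
    (hCS' : C ⊆ S') (hC'C : C' ⊆ C) : C ⊆ C' := by
  obtain ⟨a, ha⟩ := hC'.nonempty
  rw [hC'.eq_of_mem ha]
  exact fun b hb =>
    ⟨(hC.reachIn_self (hC'C ha) hb).mono hCS', (hC.reachIn_self hb (hC'C ha)).mono hCS'⟩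

end IsSCCIn

lemma eq_univ_of_forall_adj_mem (hsc : ∀ a b : V, ReachIn D Set.univ a b) {T : Set V}
    (hT : ∀ w z, D w z → z ∈ T → w ∈ T) (hne : T.Nonempty) : T = Set.univ := by
  obtain ⟨x, hx⟩ := hne
  refine Set.eq_univ_of_forall fun w => ?_
  induction (hsc w x).2.2 using Relation.ReflTransGen.head_induction_on with
  | refl => exact hx
  | head hstep _ ih => exact hT _ _ hstep.2 ih

lemma IsVertexDirection.subset_of_disjoint {f : Finset V → Set V} (hf : IsVertexDirection D f)
    {X S : Finset V} (hXS : Disjoint (X : Set V) (f S)) : f S ⊆ f X := by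
  classical
  have hsub : f S ⊆ (↑(X ∪ S) : Set V)ᶜ := by
    rw [Finset.coe_union, Set.compl_union]
    exact Set.subset_inter hXS.subset_compl_left (hf.1 S).subset
  exact ((hf.1 S).subset_of_subset (hf.1 (X ∪ S)) hsub
    (hf.2 _ _ Finset.subset_union_right)).trans (hf.2 _ _ Finset.subset_union_left)

lemma IsVertexDirection.frequently_mem {g : Finset V → Set V} (hg : IsVertexDirection D g)
    {u : ℕ → V} (hgu : ∀ X : Finset V, (g X ∩ Set.range u).Nonempty) (X : Finset V) :
    ∃ᶠ k in atTop, u k ∈ g X := by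
  classical
  refine frequently_atTop.2 fun j => ?_
  obtain ⟨_, hgY, k, rfl⟩ := hgu (X ∪ (Finset.range j).image u)
  refine ⟨k, not_lt.1 fun hkj => (hg.1 _).subset hgY ?_, hg.2 _ _ Finset.subset_union_left hgY⟩
  exact Finset.mem_coe.2
    (Finset.mem_union_right _ (Finset.mem_image_of_mem u (Finset.mem_range.2 hkj)))

end StrongComponents

section Separations

variable {D : V → V → Prop}

lemma IsSep.mem_left_of_adj {A B : Set V} (hAB : IsSep D A B) {w z : V} (hwz : D w z)
    (hz : z ∈ A \ B) : w ∈ A := by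
  by_contra hw
  have hwB : w ∈ B := ((hAB.1 ▸ Set.mem_univ w : w ∈ A ∪ B)).resolve_left hw
  exact hAB.2 w ⟨hwB, hw⟩ z hz hwz

lemma IsSep.nonempty_right_of_ne {A B A' B' : Set V} (h' : IsSep D A' B') (hA : A' ⊆ A)
    (hB : B ⊆ B') (hne : A' ≠ A ∨ B' ≠ B) : B'.Nonempty := by
  rw [Set.nonempty_iff_ne_empty]
  rintro rfl
  have hA' : A' = Set.univ := by simpa using h'.1
  obtain rfl : A = Set.univ := Set.univ_subset_iff.1 (hA' ▸ hA)
  rcases hne with hne | hne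
  · exact hne hA'
  · exact hne (Set.subset_empty_iff.1 hB).symm

variable {A B : ℕ → Set V}

lemma iInter_diff_eq_empty (hsc : ∀ a b : V, ReachIn D Set.univ a b)
    (hsep : ∀ i, IsSep D (A i) (B i)) (hB : Monotone B)
    (hdisj : ∀ i, Disjoint (A i ∩ B i) (A (i + 1) ∩ B (i + 1))) (hne : ∃ i, (B i).Nonempty) :
    ⋂ i, A i \ B i = ∅ := by
  have hclosed : ∀ w z, D w z → z ∈ ⋂ i, A i \ B i → w ∈ ⋂ i, A i \ B i := by
    intro w z hwz hz
    simp only [Set.mem_iInter] at hz ⊢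
    have hwA : ∀ i, w ∈ A i := fun i => (hsep i).mem_left_of_adj hwz (hz i)
    exact fun i => ⟨hwA i, fun hwB => Set.disjoint_left.1 (hdisj i) ⟨hwA i, hwB⟩
      ⟨hwA (i + 1), hB i.le_succ hwB⟩⟩
  obtain ⟨i, v, hv⟩ := hne
  by_contra hT
  have hall := eq_univ_of_forall_adj_mem hsc hclosed (Set.nonempty_iff_ne_empty.2 hT)
  exact (Set.mem_iInter.1 (hall ▸ Set.mem_univ v) i).2 hv

lemma eventually_disjoint_of_iInter_eq_empty {S : ℕ → Set V} (hS : Antitone S)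
    (hempty : ⋂ i, S i = ∅) (X : Finset V) : ∀ᶠ k in atTop, Disjoint (X : Set V) (S k) := by
  have hx : ∀ x ∈ X, ∀ᶠ k in atTop, x ∉ S k := fun x _ => by
    obtain ⟨j, hj⟩ : ∃ j, x ∉ S j := by
      simpa using Set.eq_empty_iff_forall_notMem.1 hempty x
    exact eventually_atTop.2 ⟨j, fun k hk hxk => hj (hS hk hxk)⟩
  filter_upwards [(eventually_all_finset X).2 hx] with k hk
  exact Set.disjoint_left.2 hk

end Separations

/-- Given a strictly descending sequence of finite order separations with disjoint separators
pointing away from `f`, and `U` consisting of one vertex of `f` of each separator, `f` is the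
unique vertex-direction in the closure of `U`. -/
theorem unique_direction_in_closure (D : V → V → Prop)
    (hsc : ∀ a b : V, ReachIn D Set.univ a b)
    (f : Finset V → Set V) (hf : IsVertexDirection D f)
    (A B : ℕ → Set V) (h : ∀ i, (A i ∩ B i).Finite)
    (hsep : ∀ i, IsSep D (A i) (B i))
    (haway : ∀ i, PointsAway D f (A i) (B i) (h i))
    (hdesc : ∀ i, A (i + 1) ⊆ A i ∧ B i ⊆ B (i + 1) ∧ (A (i + 1) ≠ A i ∨ B (i + 1) ≠ B i))
    (hdisj : ∀ i j, i ≠ j → Disjoint (A i ∩ B i) (A j ∩ B j))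
    (u : ℕ → V) (hu : ∀ i, u i ∈ f (h i).toFinset) :
    (∀ X : Finset V, (f X ∩ Set.range u).Nonempty) ∧
    ∀ g, IsVertexDirection D g → (∀ X : Finset V, (g X ∩ Set.range u).Nonempty) → g = f := by
  have hA : Antitone A := antitone_nat_of_succ_le fun i => (hdesc i).1
  have hB : Monotone B := monotone_nat_of_le_succ fun i => (hdesc i).2.1
  have hempty : ⋂ i, A i \ B i = ∅ :=
    iInter_diff_eq_empty hsc hsep hB (fun i => hdisj i (i + 1) i.succ_ne_self.symm)
      ⟨1, (hsep 1).nonempty_right_of_ne (hdesc 0).1 (hdesc 0).2.1 (hdesc 0).2.2⟩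
  have hfu : ∀ X : Finset V, ∀ᶠ k in atTop, u k ∈ f X := fun X =>
    (eventually_disjoint_of_iInter_eq_empty
      (fun _ _ hij => Set.sdiff_subset_sdiff (hA hij) (hB hij)) hempty X).mono
      fun k hk => hf.subset_of_disjoint (hk.mono_right (haway k)) (hu k)
  refine ⟨fun X => ?_, fun g hg hgu => funext fun X => ?_⟩
  · obtain ⟨k, hk⟩ := (hfu X).exists
    exact ⟨u k, hk, k, rfl⟩
  · obtain ⟨k, hfk, hgk⟩ := ((hfu X).and_frequently (hg.frequently_mem hgu X)).exists
    exact (hg.1 X).eq_of_mem_of_mem (hf.1 X) hgk hfk
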